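/- arXiv:2111.15353 — 3 statements merged into one kernel-verified Lean document; each statement's English description precedes it below -/
import Mathlib

section
/- For any positive integer r, the Reeve tetrahedron T_r with vertices (0,0,0), (1,0,0), (0,1,0), (1,1,r) contains exactly 4 lattice points of ℤ³ (its vertices): it has no interior lattice points and no boundary lattice points other than the vertices. -/
/-- The Reeve tetrahedron with parameter `r`, as a subset of ℝ³. -/
def reeve (r : ℤ) : Set (Fin 3 → ℝ) :=
  convexHull ℝ {![0, 0, 0], ![1, 0, 0], ![0, 1, 0], ![1, 1, (r : ℝ)]}

lemma reeve_subset (r : ℤ) (hr : 0 < r) :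
    reeve r ⊆ {p : Fin 3 → ℝ | 0 ≤ p 2 ∧ p 2 ≤ r * p 0 ∧ p 2 ≤ r * p 1 ∧
      r * (p 0 + p 1) ≤ r + p 2} := by
  have hr' : (0:ℝ) < r := by exact_mod_cast hr
  apply convexHull_min
  · intro p hp
    simp only [Set.mem_insert_iff, Set.mem_singleton_iff] at hp
    rcases hp with h | h | h | h <;> subst h <;>
      simp only [Set.mem_setOf_eq, Matrix.cons_val_zero, Matrix.cons_val_one,
        Matrix.head_cons, Matrix.cons_val_two, Matrix.tail_cons] <;>
      refine ⟨by linarith, by linarith, by linarith, by linarith⟩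
  · intro p hp q hq a b ha hb hab
    simp only [Set.mem_setOf_eq, Pi.add_apply, Pi.smul_apply, smul_eq_mul] at *
    obtain ⟨h1, h2, h3, h4⟩ := hp
    obtain ⟨g1, g2, g3, g4⟩ := hq
    refine ⟨by nlinarith, by nlinarith, by nlinarith, by nlinarith⟩

lemma cast_vec (a b c : ℤ) :
    (fun i => ((![a,b,c] : Fin 3 → ℤ) i : ℝ)) = ![(a:ℝ), b, c] := by
  funext i; fin_cases i <;> simp

lemma lattice_char (r : ℤ) (hr : 0 < r) :
    {p : Fin 3 → ℤ | (fun i => (p i : ℝ)) ∈ reeve r} =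
        ({![0, 0, 0], ![1, 0, 0], ![0, 1, 0], ![1, 1, r]} : Set (Fin 3 → ℤ)) := by
  ext p
  simp only [Set.mem_setOf_eq, Set.mem_insert_iff, Set.mem_singleton_iff]
  constructor
  · intro hp
    obtain ⟨h1, h2, h3, h4⟩ := reeve_subset r hr hp
    have g1 : (0:ℝ) ≤ (p 2 : ℝ) := h1
    have g2 : (p 2 : ℝ) ≤ r * p 0 := h2
    have g3 : (p 2 : ℝ) ≤ r * p 1 := h3
    have g4 : (r : ℝ) * (p 0 + p 1) ≤ r + p 2 := h4
    have h1' : 0 ≤ p 2 := by exact_mod_cast g1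
    have h2' : p 2 ≤ r * p 0 := by exact_mod_cast g2
    have h3' : p 2 ≤ r * p 1 := by exact_mod_cast g3
    have h4' : r * (p 0 + p 1) ≤ r + p 2 := by exact_mod_cast g4
    have hx0 : 0 ≤ p 0 := by nlinarith
    have hy0 : 0 ≤ p 1 := by nlinarith
    have hx1 : p 0 ≤ 1 := by nlinarith
    have hy1 : p 1 ≤ 1 := by nlinarith
    have hx : p 0 = 0 ∨ p 0 = 1 := by omega
    have hy : p 1 = 0 ∨ p 1 = 1 := by omega
    have hfun : p = ![p 0, p 1, p 2] := by funext i; fin_cases i <;> simp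
    rcases hx with hx | hx <;> rcases hy with hy | hy
    · have hz : p 2 = 0 := by nlinarith
      exact Or.inl (by rw [hfun, hx, hy, hz])
    · have hz : p 2 = 0 := by nlinarith
      exact Or.inr (Or.inr (Or.inl (by rw [hfun, hx, hy, hz])))
    · have hz : p 2 = 0 := by nlinarith
      exact Or.inr (Or.inl (by rw [hfun, hx, hy, hz]))
    · have hz : p 2 = r := by nlinarith
      exact Or.inr (Or.inr (Or.inr (by rw [hfun, hx, hy, hz])))
  · intro hp
    rcases hp with h | h | h | h <;> subst h <;> rw [cast_vec] <;>
      · apply subset_convexHull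
        simp [reeve]

lemma perturb {s : Set (Fin 3 → ℝ)} {p : Fin 3 → ℝ} (hp : p ∈ interior s)
    (i : Fin 3) (c : ℝ) : ∃ δ : ℝ, 0 < δ ∧ Function.update p i (p i + δ * c) ∈ s := by
  rw [mem_interior_iff_mem_nhds, Metric.mem_nhds_iff] at hp
  obtain ⟨ε, hε, hball⟩ := hp
  refine ⟨ε / (2 * (|c| + 1)), by positivity, ?_⟩
  apply hball
  rw [Metric.mem_ball, dist_pi_lt_iff hε]
  intro b
  rcases eq_or_ne b i with h | h
  · subst h
    rw [Function.update_self, Real.dist_eq]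
    have hc : |c| < 2 * (|c| + 1) := by nlinarith [abs_nonneg c]
    rw [show p b + ε / (2 * (|c| + 1)) * c - p b = ε / (2 * (|c| + 1)) * c by ring]
    rw [abs_mul, abs_of_pos (by positivity : (0:ℝ) < ε / (2 * (|c| + 1)))]
    rw [div_mul_eq_mul_div, div_lt_iff₀ (by positivity)]
    nlinarith [abs_nonneg c]
  · rw [Function.update_of_ne h]
    simpa using hε

theorem stmt_12 (r : ℤ) (hr : 0 < r) :
    {p : Fin 3 → ℤ | (fun i => (p i : ℝ)) ∈ reeve r} =
        ({![0, 0, 0], ![1, 0, 0], ![0, 1, 0], ![1, 1, r]} : Set (Fin 3 → ℤ)) ∧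
      {p : Fin 3 → ℤ | (fun i => (p i : ℝ)) ∈ interior (reeve r)} = ∅ := by
  have hr' : (0:ℝ) < r := by exact_mod_cast hr
  refine ⟨lattice_char r hr, ?_⟩
  ext p
  simp only [Set.mem_setOf_eq, Set.mem_empty_iff_false, iff_false]
  intro hp
  have hmem : (fun i => (p i : ℝ)) ∈ reeve r := interior_subset hp
  have hv := (Set.ext_iff.mp (lattice_char r hr) p).mp hmem
  simp only [Set.mem_insert_iff, Set.mem_singleton_iff] at hv
  rcases hv with h | h | h | h <;> rw [h, cast_vec] at hp
  · obtain ⟨δ, hδ, hq⟩ := perturb hp 0 (-1)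
    obtain ⟨q1, q2, q3, q4⟩ := reeve_subset r hr hq
    simp [Function.update] at q1 q2 q3 q4
    nlinarith
  · obtain ⟨δ, hδ, hq⟩ := perturb hp 1 (-1)
    obtain ⟨q1, q2, q3, q4⟩ := reeve_subset r hr hq
    simp [Function.update] at q1 q2 q3 q4
    nlinarith
  · obtain ⟨δ, hδ, hq⟩ := perturb hp 0 (-1)
    obtain ⟨q1, q2, q3, q4⟩ := reeve_subset r hr hq
    simp [Function.update] at q1 q2 q3 q4
    nlinarith
  · obtain ⟨δ, hδ, hq⟩ := perturb hp 2 1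
    obtain ⟨q1, q2, q3, q4⟩ := reeve_subset r hr hq
    simp [Function.update] at q1 q2 q3 q4
    nlinarith
end

section
/- For any positive integer r, the volume of the Reeve tetrahedron with vertices (0,0,0), (1,0,0), (0,1,0), (1,1,r) equals r/6. Consequently, Reeve tetrahedra for different r have the same number of lattice points but different volumes, so no formula computing volume from lattice point counts (interior and boundary) can hold for all lattice polyhedra in ℝ³. -/
/-!
The Reeve tetrahedron is the image of the corner simplex `{x ≥ 0, x₀ + x₁ + x₂ ≤ 1}` under a
linear map `A` of determinant `r`, so its volume is `r / 3!`. A lattice point `p = A x` with `x`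
in the corner simplex has `p₀ = x₀ + x₂` and `p₁ = x₁ + x₂` in `[0, 1]`, which pins `p` down to a
vertex; for `x` in the interior `p₀` would lie in `(0, 1)`. So every Reeve tetrahedron has no
interior lattice points and four boundary ones, while the volumes differ.
-/

open MeasureTheory
open scoped ENNReal

/-- Number of interior lattice points of a set in ℝ³. -/
noncomputable def intCount (S : Set (Fin 3 → ℝ)) : ℕ :=
  {p : Fin 3 → ℤ | (fun i => (p i : ℝ)) ∈ interior S}.ncard

/-- Number of boundary lattice points of a set in ℝ³. -/
noncomputable def bdCount (S : Set (Fin 3 → ℝ)) : ℕ :=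
  {p : Fin 3 → ℤ | (fun i => (p i : ℝ)) ∈ frontier S}.ncard

open Set
open scoped Nat

theorem Continuous.interior_image_subset {X Y : Type*} [TopologicalSpace X] [TopologicalSpace Y]
    {f : X → Y} (hf : Continuous f) (hinj : Function.Injective f) (s : Set X) :
    interior (f '' s) ⊆ f '' interior s := by
  intro y hy
  obtain ⟨x, -, rfl⟩ := interior_subset hy
  have hx : x ∈ interior (f ⁻¹' (f '' s)) := preimage_interior_subset_interior_preimage hf hy
  exact ⟨x, by rwa [hinj.preimage_image] at hx, rfl⟩

def cornerSimplex (n : ℕ) (a : ℝ) : Set (Fin n → ℝ) :=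
  {x | (∀ i, 0 ≤ x i) ∧ ∑ i, x i ≤ a}

theorem isClosed_cornerSimplex (n : ℕ) (a : ℝ) : IsClosed (cornerSimplex n a) := by
  simp only [cornerSimplex, ofPred_and, ofPred_forall]
  exact (isClosed_iInter fun i => isClosed_le continuous_const (continuous_apply i)).inter
    (isClosed_le (by fun_prop) continuous_const)

theorem convex_cornerSimplex (n : ℕ) (a : ℝ) : Convex ℝ (cornerSimplex n a) := by
  rintro x ⟨hx₀, hx⟩ y ⟨hy₀, hy⟩ s t hs ht hst
  refine ⟨fun i => ?_, ?_⟩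
  · have := hx₀ i
    have := hy₀ i
    simp only [Pi.add_apply, Pi.smul_apply, smul_eq_mul]
    positivity
  · simp only [Pi.add_apply, Pi.smul_apply, smul_eq_mul, Finset.sum_add_distrib, ← Finset.mul_sum]
    calc s * ∑ i, x i + t * ∑ i, y i ≤ s * a + t * a := by gcongr
      _ = a := by rw [← add_mul, hst, one_mul]

theorem cornerSimplex_eq_empty (n : ℕ) {a : ℝ} (ha : a < 0) : cornerSimplex n a = ∅ :=
  eq_empty_of_forall_notMem fun _ hx =>
    (Finset.sum_nonneg fun i _ => hx.1 i).not_gt (hx.2.trans_lt ha)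

theorem cons_mem_cornerSimplex_iff {n : ℕ} {a t : ℝ} {y : Fin n → ℝ} :
    Fin.cons t y ∈ cornerSimplex (n + 1) a ↔ 0 ≤ t ∧ y ∈ cornerSimplex n (a - t) := by
  simp only [cornerSimplex, mem_ofPred_eq, Fin.forall_fin_succ, Fin.sum_univ_succ, Fin.cons_zero,
    Fin.cons_succ, le_sub_iff_add_le', and_assoc]

theorem convexHull_insert_zero_range_single (n : ℕ) :
    convexHull ℝ (insert 0 (range fun i : Fin n => Pi.single i 1)) = cornerSimplex n 1 := by
  refine (convexHull_min ?_ (convex_cornerSimplex n 1)).antisymm fun x ⟨hx₀, hx⟩ => ?_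
  · refine insert_subset ⟨fun _ => le_rfl, by simp⟩ (range_subset_iff.2 fun i => ?_)
    exact ⟨(Pi.single_nonneg.2 zero_le_one : (0 : Fin n → ℝ) ≤ Pi.single i 1), by simp⟩
  · -- `x = (1 - ∑ xᵢ) • 0 + ∑ xᵢ • eᵢ`, a convex combination indexed by `Option (Fin n)`
    let w : Option (Fin n) → ℝ := fun o => o.elim (1 - ∑ i, x i) x
    let z : Option (Fin n) → Fin n → ℝ := fun o => o.elim 0 fun i => Pi.single i 1
    have hmem := (convex_convexHull ℝ (insert 0 (range fun i : Fin n => Pi.single i 1))).sum_mem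
      (t := Finset.univ) (w := w) (z := z)
      (fun o _ => by cases o <;> simp [w, hx₀, hx]) (by simp [w, Fintype.sum_option])
      (fun o _ => subset_convexHull ℝ _ (by cases o <;> simp [z]))
    simpa [w, z, Fintype.sum_option, ← pi_eq_sum_univ'] using hmem

theorem interior_cornerSimplex_subset (n : ℕ) [NeZero n] (a : ℝ) :
    interior (cornerSimplex n a) ⊆ {x | (∀ i, 0 < x i) ∧ ∑ i, x i < a} := by
  intro x hx
  let σ : StrongDual ℝ (Fin n → ℝ) := ∑ i, ContinuousLinearMap.proj i
  have hσ : σ ≠ 0 := fun h => by simpa [σ] using congr($h (Pi.single 0 1))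
  refine ⟨fun i => ?_, ?_⟩
  · have := (isOpenMap_eval i).mapsTo_interior (t := Ici 0) (fun y hy => hy.1 i) hx
    rwa [interior_Ici] at this
  · have := (σ.isOpenMap_of_ne_zero hσ).mapsTo_interior (t := Iic a)
      (fun y hy => by simpa [σ] using hy.2) hx
    rw [interior_Iic] at this
    simpa [σ] using this

theorem integral_sub_pow_div_factorial (n : ℕ) (a : ℝ) :
    ∫ t in (0 : ℝ)..a, (a - t) ^ n / n ! = a ^ (n + 1) / (n + 1)! := by
  rw [intervalIntegral.integral_div, intervalIntegral.integral_comp_sub_left (· ^ n),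
    sub_self, sub_zero, integral_pow, Nat.factorial_succ]
  push_cast
  field_simp
  ring

theorem volume_cornerSimplex (n : ℕ) {a : ℝ} (ha : 0 ≤ a) :
    volume (cornerSimplex n a) = ENNReal.ofReal (a ^ n / n !) := by
  induction n generalizing a with
  | zero => simp [cornerSimplex, ha, volume_pi]
  | succ n ih =>
    -- Fubini along the first coordinate: the slice at `x₀ = t` is `cornerSimplex n (a - t)`.
    let e := MeasurableEquiv.piFinSuccAbove (fun _ : Fin (n + 1) => ℝ) 0
    have hmeas := (isClosed_cornerSimplex (n + 1) a).measurableSet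
    have hslice : ∀ t, volume (Prod.mk t ⁻¹' (e.symm ⁻¹' cornerSimplex (n + 1) a)) =
        (Icc 0 a).indicator (fun t => ENNReal.ofReal ((a - t) ^ n / n !)) t := by
      intro t
      have hprod : Prod.mk t ⁻¹' (e.symm ⁻¹' cornerSimplex (n + 1) a) =
          {y | 0 ≤ t ∧ y ∈ cornerSimplex n (a - t)} := by
        ext y
        simp only [e, mem_preimage, MeasurableEquiv.piFinSuccAbove_symm_apply, Fin.insertNthEquiv,
          Equiv.coe_fn_mk, Fin.insertNth_zero']
        exact cons_mem_cornerSimplex_iff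
      by_cases ht : t ∈ Icc 0 a
      · simp [hprod, ht.1, indicator_of_mem ht, ih (sub_nonneg.2 ht.2)]
      · have hempty : {y | 0 ≤ t ∧ y ∈ cornerSimplex n (a - t)} = ∅ := by
          refine eq_empty_of_forall_notMem fun y ⟨ht₀, hy⟩ => ?_
          have hat : a - t < 0 := sub_neg.2 (not_le.1 fun hta => ht ⟨ht₀, hta⟩)
          rwa [cornerSimplex_eq_empty n hat] at hy
        rw [hprod, hempty, indicator_of_notMem ht, measure_empty]
    rw [← (volume_preserving_piFinSuccAbove (fun _ : Fin (n + 1) => ℝ) 0).symm.measure_preimage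
      hmeas.nullMeasurableSet, Measure.volume_eq_prod,
      Measure.prod_apply (e.symm.measurable hmeas)]
    simp_rw [hslice]
    rw [lintegral_indicator measurableSet_Icc, ← ofReal_integral_eq_lintegral_ofReal,
      integral_Icc_eq_integral_Ioc, ← intervalIntegral.integral_of_le ha,
      integral_sub_pow_div_factorial]
    · exact (by fun_prop : Continuous fun t : ℝ => (a - t) ^ n / n !).integrableOn_Icc
    · filter_upwards [ae_restrict_mem measurableSet_Icc] with t ht
      exact div_nonneg (pow_nonneg (sub_nonneg.2 ht.2) n) (by positivity)

/-- Sends `0` and the standard basis vectors to the vertices of the Reeve tetrahedron. -/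
noncomputable def reeveMap (c : ℝ) : (Fin 3 → ℝ) →ₗ[ℝ] (Fin 3 → ℝ) :=
  Matrix.toLin' !![1, 0, 1; 0, 1, 1; 0, 0, c]

theorem reeveMap_apply (c : ℝ) (x : Fin 3 → ℝ) :
    reeveMap c x = ![x 0 + x 2, x 1 + x 2, c * x 2] := by
  ext i
  fin_cases i <;> simp [reeveMap, Matrix.mulVec, dotProduct, Fin.sum_univ_three]

theorem det_reeveMap (c : ℝ) : LinearMap.det (reeveMap c) = c := by
  simp [reeveMap, LinearMap.det_toLin', Matrix.det_fin_three]

theorem reeveMap_injective {c : ℝ} (hc : c ≠ 0) : Function.Injective (reeveMap c) := by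
  intro x y h
  simp only [reeveMap_apply, Matrix.vecCons_inj, and_true] at h
  obtain ⟨h₀, h₁, h₂⟩ := h
  have h₂' : x 2 = y 2 := mul_left_cancel₀ hc h₂
  ext i
  fin_cases i <;> simp <;> linarith

theorem reeve_eq_image (r : ℤ) : reeve r = reeveMap r '' cornerSimplex 3 1 := by
  rw [← convexHull_insert_zero_range_single, LinearMap.image_convexHull, image_insert_eq,
    map_zero, ← range_comp]
  unfold reeve
  congr 1
  ext p
  simp [Fin.exists_fin_succ, reeveMap_apply, Pi.single_apply, eq_comm (b := p),
    ← Matrix.zero_empty]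

theorem isClosed_reeve (r : ℤ) : IsClosed (reeve r) :=
  (toFinite _).isCompact_convexHull (𝕜 := ℝ) |>.isClosed

theorem volume_reeve {r : ℤ} (hr : 0 < r) : volume (reeve r) = ENNReal.ofReal ((r : ℝ) / 6) := by
  rw [reeve_eq_image, Measure.addHaar_image_linearMap, det_reeveMap,
    volume_cornerSimplex 3 zero_le_one, abs_of_pos (Int.cast_pos.2 hr), ← ENNReal.ofReal_mul (Int.cast_pos.2 hr).le]
  congr 1
  norm_num [Nat.factorial]
  ring

def reeveVertices (r : ℤ) : Set (Fin 3 → ℤ) :=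
  {![0, 0, 0], ![1, 0, 0], ![0, 1, 0], ![1, 1, r]}

theorem ncard_reeveVertices (r : ℤ) : (reeveVertices r).ncard = 4 := by
  rw [reeveVertices, ncard_insert_of_notMem, ncard_insert_of_notMem, ncard_pair] <;>
    simp [funext_iff, Fin.forall_fin_succ]

theorem intCast_vec3 (a b c : ℤ) : (fun i => ((![a, b, c] i : ℤ) : ℝ)) = ![(a : ℝ), b, c] := by
  ext i
  fin_cases i <;> rfl

theorem cast_mem_reeve_iff (r : ℤ) (p : Fin 3 → ℤ) :
    (fun i => (p i : ℝ)) ∈ reeve r ↔ p ∈ reeveVertices r := by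
  refine ⟨fun hp => ?_, ?_⟩
  · rw [reeve_eq_image] at hp
    obtain ⟨x, ⟨hx₀, hx⟩, hxp⟩ := hp
    simp only [reeveMap_apply, Fin.sum_univ_three] at hxp hx
    have h₀ : x 0 + x 2 = p 0 := congrFun hxp 0
    have h₁ : x 1 + x 2 = p 1 := congrFun hxp 1
    have h₂ : r * x 2 = p 2 := congrFun hxp 2
    have := hx₀ 0
    have := hx₀ 1
    have := hx₀ 2
    have h01 : ∀ m : ℤ, (0 : ℝ) ≤ m → (m : ℝ) ≤ 1 → m = 0 ∨ m = 1 := fun m h0 h1 => by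
      norm_cast at h0 h1
      omega
    have hp₀ := h01 (p 0) (by linarith) (by linarith)
    have hp₁ := h01 (p 1) (by linarith) (by linarith)
    have hp₂ : p 2 = r * (p 0 * p 1) := by
      suffices x 2 = p 0 * p 1 by rw [this] at h₂; exact_mod_cast h₂.symm
      rcases hp₀ with hp₀ | hp₀ <;> rcases hp₁ with hp₁ | hp₁ <;>
        simp only [hp₀, hp₁, Int.cast_zero, Int.cast_one] at h₀ h₁ ⊢ <;> linarith
    have hp : p = ![p 0, p 1, p 2] := by
      ext i
      fin_cases i <;> rfl
    rw [hp, hp₂, reeveVertices]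
    rcases hp₀ with hp₀ | hp₀ <;> rcases hp₁ with hp₁ | hp₁ <;> simp [hp₀, hp₁]
  · rintro (rfl | rfl | rfl | rfl) <;> refine subset_convexHull ℝ _ ?_ <;> rw [intCast_vec3] <;>
      simp

theorem cast_notMem_interior_reeve {r : ℤ} (hr : r ≠ 0) (p : Fin 3 → ℤ) :
    (fun i => (p i : ℝ)) ∉ interior (reeve r) := by
  intro hp
  rw [reeve_eq_image] at hp
  obtain ⟨x, hx, hxp⟩ := (reeveMap (r : ℝ)).continuous_of_finiteDimensional.interior_image_subset
    (reeveMap_injective (Int.cast_ne_zero.2 hr)) _ hp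
  obtain ⟨hx₀, hx⟩ := interior_cornerSimplex_subset 3 1 hx
  simp only [Fin.sum_univ_three] at hx
  have h₀ : x 0 + x 2 = p 0 := by simpa [reeveMap_apply] using congrFun hxp 0
  have := hx₀ 0
  have := hx₀ 1
  have := hx₀ 2
  have hlo : (0 : ℝ) < p 0 := by linarith
  have hhi : (p 0 : ℝ) < 1 := by linarith
  norm_cast at hlo hhi
  omega

theorem intCount_reeve {r : ℤ} (hr : r ≠ 0) : intCount (reeve r) = 0 := by
  simp [intCount, cast_notMem_interior_reeve hr]

theorem bdCount_reeve {r : ℤ} (hr : r ≠ 0) : bdCount (reeve r) = 4 := by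
  have : {p : Fin 3 → ℤ | (fun i => (p i : ℝ)) ∈ frontier (reeve r)} = reeveVertices r := by
    ext p
    simp only [(isClosed_reeve r).frontier_eq, mem_ofPred_eq, mem_sdiff, cast_mem_reeve_iff,
      cast_notMem_interior_reeve hr, not_false_eq_true, and_true]
  rw [bdCount, this, ncard_reeveVertices]

theorem stmt_13 :
    (∀ r : ℤ, 0 < r → volume (reeve r) = ENNReal.ofReal ((r : ℝ) / 6)) ∧
      ¬ ∃ f : ℕ → ℕ → ℝ≥0∞, ∀ r : ℤ, 0 < r →
        volume (reeve r) = f (intCount (reeve r)) (bdCount (reeve r)) := by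
  refine ⟨fun r hr => volume_reeve hr, fun ⟨f, hf⟩ => ?_⟩
  have h₁ := hf 1 one_pos
  have h₂ := hf 2 two_pos
  rw [intCount_reeve one_ne_zero, bdCount_reeve one_ne_zero, volume_reeve one_pos] at h₁
  rw [intCount_reeve two_ne_zero, bdCount_reeve two_ne_zero, volume_reeve two_pos, ← h₁,
    ENNReal.ofReal_eq_ofReal_iff (by norm_num) (by norm_num)] at h₂
  norm_num at h₂
end

section
/- Let a,b,c ∈ ℤ with a ≠ 0. The index of the sublattice ℤα + ℤβ (with α=(-b,a,0), β=(-c,0,a)) inside the full lattice ℤ³ ∩ K, where K = {v : av₁+bv₂+cv₃=0} and gcd(a,b,c)=1, equals |a|. -/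
/-- The index of the sublattice `ℤα + ℤβ` (α = (-b,a,0), β = (-c,0,a)) inside the
full lattice `ℤ³ ∩ K`, `K = {v : a v₁ + b v₂ + c v₃ = 0}`, equals `|a|`. -/
theorem stmt_18 (a b c : ℤ) (ha : a ≠ 0) (hgcd : Int.gcd (Int.gcd a b) c = 1)
    (f : (Fin 3 → ℤ) →ₗ[ℤ] ℤ) (hf : ∀ w, f w = a * w 0 + b * w 1 + c * w 2)
    (hα : ![-b, a, 0] ∈ LinearMap.ker f) (hβ : ![-c, 0, a] ∈ LinearMap.ker f) :
    Nat.card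
      ((LinearMap.ker f) ⧸ (Submodule.span ℤ
        ({⟨![-b, a, 0], hα⟩, ⟨![-c, 0, a], hβ⟩} : Set (LinearMap.ker f)))) = a.natAbs := by
  classical
  set n := a.natAbs with hn
  haveI : NeZero n := ⟨Int.natAbs_ne_zero.mpr ha⟩
  have hcast_a : ((a : ℤ) : ZMod n) = 0 := by
    rw [ZMod.intCast_zmod_eq_zero_iff_dvd]
    exact Int.natAbs_dvd.mpr dvd_rfl
  -- the map h : ker f → (ZMod n)², w ↦ (w 1, w 2)
  set K := LinearMap.ker f with hK
  let h : K →ₗ[ℤ] ZMod n × ZMod n :=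
    { toFun := fun w => (((w : Fin 3 → ℤ) 1 : ZMod n), ((w : Fin 3 → ℤ) 2 : ZMod n))
      map_add' := by intro x y; simp [Prod.ext_iff]
      map_smul' := by intro m x; simp [Prod.ext_iff] }
  -- the map g : (ZMod n)² → ZMod n, (x,y) ↦ b x + c y
  let g : (ZMod n × ZMod n) →ₗ[ℤ] ZMod n :=
    { toFun := fun p => (b : ZMod n) * p.1 + (c : ZMod n) * p.2
      map_add' := by intro x y; simp; ring
      map_smul' := by intro m x; simp; ring }
  -- kernel of h is the span of α, β
  have hker : LinearMap.ker h =
      Submodule.span ℤ ({⟨![-b, a, 0], hα⟩, ⟨![-c, 0, a], hβ⟩} : Set K) := by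
    apply le_antisymm
    · intro w hw
      simp only [LinearMap.mem_ker, h, LinearMap.coe_mk, AddHom.coe_mk, Prod.ext_iff,
        Prod.fst_zero, Prod.snd_zero] at hw
      obtain ⟨h1, h2⟩ := hw
      rw [ZMod.intCast_zmod_eq_zero_iff_dvd] at h1 h2
      rw [Int.natAbs_dvd] at h1 h2
      obtain ⟨s, hs⟩ := h1
      obtain ⟨t, ht⟩ := h2
      have hw0 : (w : Fin 3 → ℤ) 0 = -(b * s + c * t) := by
        have hfw : f (w : Fin 3 → ℤ) = 0 := w.2
        rw [hf] at hfw
        rw [hs, ht] at hfw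
        have : a * ((w : Fin 3 → ℤ) 0 + (b * s + c * t)) = 0 := by ring_nf; linarith [hfw]
        have := mul_eq_zero.mp this
        rcases this with h' | h'
        · exact absurd h' ha
        · linarith
      have hweq : w = s • (⟨![-b, a, 0], hα⟩ : K) + t • (⟨![-c, 0, a], hβ⟩ : K) := by
        apply Subtype.ext
        funext i
        fin_cases i <;>
          simp [hw0, hs, ht, Matrix.cons_val_zero, Matrix.cons_val_one] <;> ring
      rw [hweq]
      exact Submodule.add_mem _
        (Submodule.smul_mem _ _ (Submodule.subset_span (by simp)))
        (Submodule.smul_mem _ _ (Submodule.subset_span (by simp)))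
    · rw [Submodule.span_le]
      rintro x (rfl | rfl) <;>
        simp [h, SetLike.mem_coe, LinearMap.mem_ker, Prod.ext_iff, hcast_a]
  -- range of h is the kernel of g
  have hrange : LinearMap.range h = LinearMap.ker g := by
    apply le_antisymm
    · rintro _ ⟨w, rfl⟩
      simp only [LinearMap.mem_ker, h, g, LinearMap.coe_mk, AddHom.coe_mk]
      have hfw : f (w : Fin 3 → ℤ) = 0 := w.2
      rw [hf] at hfw
      have : (b : ZMod n) * ((w : Fin 3 → ℤ) 1 : ZMod n)
          + (c : ZMod n) * ((w : Fin 3 → ℤ) 2 : ZMod n)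
          = ((b * (w : Fin 3 → ℤ) 1 + c * (w : Fin 3 → ℤ) 2 : ℤ) : ZMod n) := by
        push_cast; ring
      rw [this]
      have heq : (b * (w : Fin 3 → ℤ) 1 + c * (w : Fin 3 → ℤ) 2 : ℤ)
          = -(a * (w : Fin 3 → ℤ) 0) := by linarith
      rw [heq]
      push_cast [hcast_a]
      ring
    · rintro ⟨x, y⟩ hxy
      simp only [LinearMap.mem_ker, g, LinearMap.coe_mk, AddHom.coe_mk] at hxy
      obtain ⟨x', rfl⟩ := ZMod.intCast_surjective x
      obtain ⟨y', rfl⟩ := ZMod.intCast_surjective y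
      have : ((b * x' + c * y' : ℤ) : ZMod n) = 0 := by push_cast; linear_combination hxy
      rw [ZMod.intCast_zmod_eq_zero_iff_dvd, Int.natAbs_dvd] at this
      obtain ⟨m, hm⟩ := this
      have hmem : (![-m, x', y'] : Fin 3 → ℤ) ∈ LinearMap.ker f := by
        rw [LinearMap.mem_ker, hf]
        simp [Matrix.cons_val_zero, Matrix.cons_val_one]
        linarith
      exact ⟨⟨![-m, x', y'], hmem⟩, by simp [h]⟩
  -- g is surjective
  have hgsurj : Function.Surjective g := by
    intro x
    obtain ⟨m, rfl⟩ := ZMod.intCast_surjective x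
    -- Bezout: 1 = gcd(a,b) * P + c * Q and gcd(a,b) = a*A + b*B
    have h1 : (1 : ℤ) = (Int.gcd a b : ℤ) * Int.gcdA (Int.gcd a b) c
        + c * Int.gcdB (Int.gcd a b) c := by
      have := Int.gcd_eq_gcd_ab (Int.gcd a b : ℤ) c
      rw [hgcd] at this
      exact_mod_cast this
    have h2 : (Int.gcd a b : ℤ) = a * Int.gcdA a b + b * Int.gcdB a b :=
      Int.gcd_eq_gcd_ab a b
    set P := Int.gcdA (Int.gcd a b) c
    set Q := Int.gcdB (Int.gcd a b) c
    set A := Int.gcdA a b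
    set B := Int.gcdB a b
    have key : (1 : ℤ) = a * (A * P) + b * (B * P) + c * Q := by
      rw [h1, h2]; ring
    refine ⟨(((m * (B * P) : ℤ) : ZMod n), ((m * Q : ℤ) : ZMod n)), ?_⟩
    simp only [g, LinearMap.coe_mk, AddHom.coe_mk]
    have : ((m * (a * (A * P) + b * (B * P) + c * Q) : ℤ) : ZMod n) = (m : ZMod n) := by
      rw [← key]; norm_num
    calc (b : ZMod n) * ((m * (B * P) : ℤ) : ZMod n) + (c : ZMod n) * ((m * Q : ℤ) : ZMod n)
        = ((m * (a * (A * P) + b * (B * P) + c * Q) : ℤ) : ZMod n) := by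
          push_cast [hcast_a]; ring
      _ = (m : ZMod n) := this
  -- counting
  have e1 : (K ⧸ Submodule.span ℤ ({⟨![-b, a, 0], hα⟩, ⟨![-c, 0, a], hβ⟩} : Set K)) ≃ₗ[ℤ]
      LinearMap.range h := by
    rw [← hker]; exact h.quotKerEquivRange
  have e2 : (LinearMap.range h : Submodule ℤ (ZMod n × ZMod n)) = LinearMap.ker g := hrange
  have card_eq : Nat.card (K ⧸ Submodule.span ℤ
      ({⟨![-b, a, 0], hα⟩, ⟨![-c, 0, a], hβ⟩} : Set K)) = Nat.card (LinearMap.ker g) := by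
    rw [Nat.card_congr e1.toEquiv, e2]
  rw [card_eq]
  -- |ker g| * |ZMod n| = |(ZMod n)²| = n²
  have hq : ((ZMod n × ZMod n) ⧸ LinearMap.ker g) ≃ₗ[ℤ] ZMod n :=
    g.quotKerEquivOfSurjective hgsurj
  have htotal := Submodule.card_eq_card_quotient_mul_card (LinearMap.ker g)
  rw [Nat.card_congr hq.toEquiv] at htotal
  have hcardprod : Nat.card (ZMod n × ZMod n) = n * n := by
    rw [Nat.card_prod, Nat.card_zmod]
  rw [hcardprod, Nat.card_zmod] at htotal
  have hn0 : n ≠ 0 := Int.natAbs_ne_zero.mpr ha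
  have : Nat.card (LinearMap.ker g) = n := by
    have := htotal
    exact Nat.eq_of_mul_eq_mul_right (Nat.pos_of_ne_zero hn0) (by linarith)
  exact this
end
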